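/- arXiv:1105.2673 — 2 statements merged into one kernel-verified Lean document; each statement's English description precedes it below -/
import Mathlib

section
/- Let q be a real number with q > 1, and let v, k, j be nonnegative integers with v >= 2k and 0 <= j <= k. Then (-1)^j * q^{(k-j)*j + C(j,2)} * sum_{s=0}^{k-j} (-1)^s * q^{C(s,2)} * [k-j choose s]_q * [v-2j-s choose v-k-j]_q = (-1)^j * q^{C(k,2) + C(k-j+1,2)} * [v-k-j choose v-2k]_q. (That is, Delsarte's expression for the j-th eigenvalue of the q-Kneser graph qK(v,k) equals the simple closed form.) -/
noncomputable def gauss (q : ℝ) (n : ℤ) (i : ℕ) : ℝ :=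
  ∏ t ∈ Finset.range i, (q ^ (n - (t : ℤ)) - 1) / (q ^ ((i : ℤ) - (t : ℤ)) - 1)

section Aux
variable {q : ℝ}

lemma qzpow_ne_one (hq : 1 < q) {z : ℤ} (hz : z ≠ 0) : q ^ z ≠ 1 := by
  rcases lt_or_gt_of_ne hz with h | h
  · exact ne_of_lt (zpow_lt_one_of_neg₀ hq h)
  · exact ne_of_gt (one_lt_zpow₀ hq h)

lemma qzpow_sub_one_ne (hq : 1 < q) {z : ℤ} (hz : z ≠ 0) : q ^ z - 1 ≠ 0 :=
  sub_ne_zero_of_ne (qzpow_ne_one hq hz)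

lemma gauss_zero (n : ℤ) : gauss q n 0 = 1 := by simp [gauss]

lemma gauss_nat_eq_zero {a i : ℕ} (h : a < i) : gauss q (a:ℤ) i = 0 := by
  unfold gauss
  apply Finset.prod_eq_zero (Finset.mem_range.mpr h)
  simp

/-- Peel the `t = 0` factor, in multiplied-out form. -/
lemma gauss_star (hq : 1 < q) (n : ℤ) (i : ℕ) :
    gauss q n (i+1) * (q ^ ((i:ℤ)+1) - 1) = (q ^ n - 1) * gauss q (n-1) i := by
  have hne : q ^ ((i:ℤ)+1) - 1 ≠ 0 := qzpow_sub_one_ne hq (by positivity)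
  have h : gauss q n (i+1)
      = gauss q (n-1) i * ((q ^ n - 1) / (q ^ ((i:ℤ)+1) - 1)) := by
    unfold gauss
    rw [Finset.prod_range_succ']
    congr 1
    · apply Finset.prod_congr rfl
      intro t _
      push_cast
      ring_nf
    · push_cast
      simp
  rw [h]
  field_simp

/-- Second absorption identity. -/
lemma gauss_abs2 (hq : 1 < q) : ∀ (i : ℕ) (n : ℤ),
    gauss q n i * (q ^ (n - (i:ℤ)) - 1) = (q ^ n - 1) * gauss q (n-1) i := by
  intro i
  induction i with
  | zero => intro n; simp [gauss_zero]
  | succ i IH =>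
    intro n
    have h1 := gauss_star hq n i
    have h2 := gauss_star hq (n-1) i
    have h3 := IH (n-1)
    have hne : q ^ ((i:ℤ)+1) - 1 ≠ 0 := qzpow_sub_one_ne hq (by positivity)
    have e1 : n - ((i+1 : ℕ) : ℤ) = (n-1) - (i:ℤ) := by push_cast; ring
    have e2 : n - 1 - 1 = n - 2 := by ring
    rw [e1]
    apply mul_left_cancel₀ hne
    calc (q ^ ((i:ℤ)+1) - 1) * (gauss q n (i+1) * (q ^ (n - 1 - (i:ℤ)) - 1))
        = (gauss q n (i+1) * (q ^ ((i:ℤ)+1) - 1)) * (q ^ (n - 1 - (i:ℤ)) - 1) := by ring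
      _ = (q ^ n - 1) * (gauss q (n-1) i * (q ^ (n - 1 - (i:ℤ)) - 1)) := by rw [h1]; ring
      _ = (q ^ n - 1) * ((q ^ (n-1) - 1) * gauss q (n-1-1) i) := by rw [h3]
      _ = (q ^ ((i:ℤ)+1) - 1) * ((q ^ n - 1) * gauss q (n-1) (i+1)) := by
            rw [← h2]; ring

/-- q-Pascal rule. -/
lemma gauss_pascal (hq : 1 < q) (n : ℤ) (hn : n ≠ 0) (i : ℕ) :
    gauss q n (i+1) = gauss q (n-1) (i+1) + q ^ (n - ((i:ℤ)+1)) * gauss q (n-1) i := by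
  have hq0 : q ≠ 0 := by positivity
  have h1 := gauss_abs2 hq (i+1) n
  have h2 := gauss_star hq n i
  have hz : q ^ (n - ((i:ℤ)+1)) * q ^ ((i:ℤ)+1) = q ^ n := by
    rw [← zpow_add₀ hq0]; ring_nf
  have hq1 : q ^ n - 1 ≠ 0 := qzpow_sub_one_ne hq hn
  have e1 : n - ((i+1 : ℕ) : ℤ) = n - ((i:ℤ)+1) := by push_cast; ring
  rw [e1] at h1
  apply mul_left_cancel₀ hq1
  linear_combination h1 + q ^ (n - ((i:ℤ)+1)) * h2 - gauss q n (i+1) * hz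

lemma choose_two_succ (x : ℕ) : (x+1).choose 2 = x.choose 2 + x := by
  rw [Nat.choose_succ_succ, Nat.choose_one_right, Nat.add_comm]

lemma choose_two_add (a : ℕ) : ∀ b : ℕ, (a+b).choose 2 = a.choose 2 + b.choose 2 + a*b := by
  intro b
  induction b with
  | zero => simp
  | succ b IH =>
    rw [show a + (b+1) = (a+b)+1 by ring, choose_two_succ, IH, choose_two_succ]
    ring

lemma sq_choose (m : ℕ) : m*m = m.choose 2 + (m+1).choose 2 := by
  induction m with
  | zero => simp
  | succ m IH =>
    rw [choose_two_succ m] at IH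
    calc (m+1)*(m+1) = m*m + 2*m + 1 := by ring
      _ = (m.choose 2 + (m.choose 2 + m)) + 2*m + 1 := by rw [IH]
      _ = (m.choose 2 + m) + ((m.choose 2 + m) + (m+1)) := by ring
      _ = (m+1).choose 2 + ((m+1).choose 2 + (m+1)) := by rw [choose_two_succ m]
      _ = (m+1).choose 2 + ((m+1)+1).choose 2 := by rw [choose_two_succ (m+1)]

/-- Key summation identity. -/
lemma keyF (hq : 1 < q) : ∀ (m : ℕ) (n : ℤ) (N : ℕ), m ≤ N → (m:ℤ) ≤ n →
    (∑ s ∈ Finset.range (m+1),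
        (-1:ℝ)^s * q ^ (s.choose 2) * gauss q (m:ℤ) s * gauss q (n - (s:ℤ)) N)
      = q ^ ((m:ℤ) * (n - (N:ℤ))) * gauss q (n - (m:ℤ)) (N - m) := by
  have hq0 : q ≠ 0 := by positivity
  intro m
  induction m with
  | zero => intro n N _ _; simp [gauss_zero]
  | succ m IH =>
    intro n N hN hn
    have hmN : m ≤ N := le_trans (Nat.le_succ m) hN
    have hmn : (m:ℤ) ≤ n - 1 := by push_cast at hn ⊢; omega
    have hmn' : (m:ℤ) ≤ n := by linarith
    -- abbreviations
    set A : ℕ → ℝ := fun s =>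
      (-1:ℝ)^s * q ^ (s.choose 2) * gauss q (m:ℤ) s * gauss q (n - (s:ℤ)) N with hA
    set B : ℕ → ℝ := fun s =>
      (-1:ℝ)^s * q ^ (s.choose 2) * gauss q (m:ℤ) s * gauss q ((n-1) - (s:ℤ)) N with hB
    have hterm : ∀ s ∈ Finset.range (m+1),
        (-1:ℝ)^(s+1) * q ^ ((s+1).choose 2) * gauss q ((m+1 : ℕ) : ℤ) (s+1)
            * gauss q (n - ((s+1:ℕ):ℤ)) N
        = A (s+1) + (- q^(m:ℤ)) * B s := by
      intro s _
      have hp := gauss_pascal hq ((m:ℤ)+1) (by positivity) s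
      rw [show (m:ℤ)+1-1 = (m:ℤ) by ring,
          show (m:ℤ)+1-((s:ℤ)+1) = (m:ℤ)-(s:ℤ) by ring] at hp
      have epow : (q:ℝ) ^ ((s+1).choose 2) * q ^ ((m:ℤ) - (s:ℤ))
          = q ^ (s.choose 2) * q ^ (m:ℤ) := by
        rw [choose_two_succ, pow_add, ← zpow_natCast q s, mul_assoc,
            ← zpow_add₀ hq0,
            show (s:ℤ) + ((m:ℤ) - (s:ℤ)) = (m:ℤ) by ring]
      simp only [hA, hB]
      push_cast
      rw [show n - ((s:ℤ)+1) = n - 1 - (s:ℤ) by ring]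
      linear_combination ((-1:ℝ)^(s+1) * q^((s+1).choose 2) * gauss q (n-1-(s:ℤ)) N) * hp
        + ((-1:ℝ)^(s+1) * gauss q (m:ℤ) s * gauss q (n-1-(s:ℤ)) N) * epow
    have hf0 : (-1:ℝ)^(0:ℕ) * q ^ ((0:ℕ).choose 2) * gauss q ((m+1 : ℕ) : ℤ) 0
        * gauss q (n - ((0:ℕ):ℤ)) N = A 0 := by
      simp [hA, gauss_zero]
    have hAtop : A (m+1) = 0 := by
      simp only [hA]
      rw [gauss_nat_eq_zero (Nat.lt_succ_self m)]
      ring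
    have step1 : (∑ s ∈ Finset.range (m+1+1),
        (-1:ℝ)^s * q ^ (s.choose 2) * gauss q ((m+1 : ℕ) : ℤ) s * gauss q (n - (s:ℤ)) N)
        = (∑ s ∈ Finset.range (m+1), A s)
          + (- q^(m:ℤ)) * ∑ s ∈ Finset.range (m+1), B s := by
      rw [Finset.sum_range_succ']
      rw [Finset.sum_congr rfl hterm]
      rw [Finset.sum_add_distrib, hf0, ← Finset.mul_sum]
      have : (∑ s ∈ Finset.range (m+1), A (s+1)) + A 0
          = ∑ s ∈ Finset.range (m+1), A s := by
        rw [← Finset.sum_range_succ', Finset.sum_range_succ, hAtop, add_zero]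
      linarith [this]
    rw [step1, IH n N hmN hmn', IH (n-1) N hmN hmn]
    -- final Pascal step
    obtain ⟨r, hr⟩ : ∃ r, N - m = r + 1 := ⟨N - (m+1), by omega⟩
    have hrN : N - (m+1) = r := by omega
    have hrz : (r:ℤ) = (N:ℤ) - (m:ℤ) - 1 := by omega
    have hnm : n - (m:ℤ) ≠ 0 := by push_cast at hn; omega
    have hp2 := gauss_pascal hq (n - (m:ℤ)) hnm r
    rw [hr, hrN]
    push_cast
    rw [show n - ((m:ℤ)+1) = n - (m:ℤ) - 1 by ring,
        show n - 1 - (m:ℤ) = n - (m:ℤ) - 1 by ring]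
    have hE1 : q^(m:ℤ) * q^((m:ℤ)*(n-1-(N:ℤ))) = q^((m:ℤ)*(n-(N:ℤ))) := by
      rw [← zpow_add₀ hq0]; congr 1; ring
    have hE2 : q^((m:ℤ)*(n-(N:ℤ))) * q^((n-(m:ℤ))-((r:ℤ)+1)) = q^(((m:ℤ)+1)*(n-(N:ℤ))) := by
      rw [← zpow_add₀ hq0]; congr 1; rw [hrz]; ring
    linear_combination (q^((m:ℤ)*(n-(N:ℤ)))) * hp2
      - (gauss q (n-(m:ℤ)-1) (r+1)) * hE1
      + (gauss q (n-(m:ℤ)-1) r) * hE2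

end Aux

/-- Delsarte's expression for the `j`-th eigenvalue of the `q`-Kneser graph
`qK(v,k)` equals the simple closed form. -/
theorem qKneser_eigenvalue_simple (q : ℝ) (hq : 1 < q) (v k j : ℕ)
    (hvk : 2 * k ≤ v) (hjk : j ≤ k) :
    (-1 : ℝ) ^ j * q ^ ((k - j) * j + j.choose 2) *
        ∑ s ∈ Finset.range (k - j + 1),
          (-1 : ℝ) ^ s * q ^ (s.choose 2) * gauss q ((k : ℤ) - (j : ℤ)) s *
            gauss q ((v : ℤ) - 2 * (j : ℤ) - (s : ℤ)) (v - k - j) =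
      (-1 : ℝ) ^ j * q ^ (k.choose 2 + (k - j + 1).choose 2) *
        gauss q ((v : ℤ) - (k : ℤ) - (j : ℤ)) (v - 2 * k) := by
  have key := keyF hq (k-j) ((v:ℤ) - 2*(j:ℤ)) (v-k-j) (by omega) (by omega)
  rw [show (k:ℤ) - (j:ℤ) = ((k-j : ℕ) : ℤ) by omega]
  rw [key]
  rw [show (v-k-j) - (k-j) = v - 2*k by omega]
  rw [show (v:ℤ) - 2*(j:ℤ) - ((k-j:ℕ):ℤ) = (v:ℤ) - (k:ℤ) - (j:ℤ) by omega]
  rw [show (v:ℤ) - 2*(j:ℤ) - ((v-k-j : ℕ):ℤ) = (((k-j:ℕ)):ℤ) by omega]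
  rw [← Nat.cast_mul, zpow_natCast]
  have hexp : k.choose 2 + (k-j+1).choose 2 = (k-j)*j + j.choose 2 + (k-j)*(k-j) := by
    obtain ⟨m, rfl⟩ : ∃ m, k = m + j := ⟨k - j, by omega⟩
    rw [show m + j - j = m by omega]
    rw [choose_two_add m j, sq_choose m]
    ring
  rw [hexp]
  ring
end

section
/- Let q be a real number with q > 1 and let v, k be nonnegative integers with v >= 2k >= 2. Define lambda_j = (-1)^j * q^{C(k,2) + C(k-j+1,2)} * [v-k-j choose v-2k]_q for j = 0, 1, ..., k. Then |lambda_0| > |lambda_1| > ... > |lambda_k|; in particular the k+1 values lambda_j are pairwise distinct, alternating in sign, with lambda_0 = q^{k^2} [v-k choose k]_q > 0 the largest in absolute value. -/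
/-- The simplified `j`-th eigenvalue of the `q`-Kneser graph `qK(v,k)`. -/
noncomputable def lam (q : ℝ) (v k j : ℕ) : ℝ :=
  (-1 : ℝ) ^ j * q ^ (k.choose 2 + (k - j + 1).choose 2) *
    gauss q ((v : ℤ) - (k : ℤ) - (j : ℤ)) (v - 2 * k)

/-- Auxiliary product `∏_{s=1}^m (q^s - 1)`. -/
noncomputable def Fq (q : ℝ) (m : ℕ) : ℝ := ∏ s ∈ Finset.range m, (q ^ (s + 1) - 1)

lemma zpow_sub_one_pos {q : ℝ} (hq : 1 < q) {m : ℤ} (hm : 1 ≤ m) : 0 < q ^ m - 1 := by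
  have : (1 : ℝ) < q ^ m := one_lt_zpow₀ hq (by omega)
  linarith

lemma Fq_pos {q : ℝ} (hq : 1 < q) (m : ℕ) : 0 < Fq q m := by
  refine Finset.prod_pos fun s _ => ?_
  have : (1 : ℝ) < q ^ (s + 1) := one_lt_pow₀ hq (by omega)
  linarith

lemma Fq_prod {q : ℝ} : ∀ i m : ℕ, i ≤ m →
    (∏ t ∈ Finset.range i, (q ^ ((m : ℤ) - (t : ℤ)) - 1)) * Fq q (m - i) = Fq q m := by
  intro i
  induction i with
  | zero => intro m _; simp
  | succ i ih =>
      intro m him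
      rw [Finset.prod_range_succ]
      have h1 : m - i = (m - (i + 1)) + 1 := by omega
      have h2 : Fq q (m - i) = Fq q (m - (i + 1)) * (q ^ ((m : ℤ) - (i : ℤ)) - 1) := by
        rw [h1, Fq, Finset.prod_range_succ, ← Fq]
        congr 2
        rw [← zpow_natCast q (m - (i + 1) + 1)]
        congr 1
        omega
      have := ih m (by omega)
      rw [h2] at this
      linarith [this]

lemma gauss_eq_Fq {q : ℝ} (hq : 1 < q) {m i : ℕ} (h : i ≤ m) :
    gauss q (m : ℤ) i = Fq q m / (Fq q i * Fq q (m - i)) := by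
  have hnum := Fq_prod (q := q) i m h
  have hden := Fq_prod (q := q) i i le_rfl
  have hF0 : Fq q 0 = 1 := by simp [Fq]
  rw [Nat.sub_self, hF0, mul_one] at hden
  have h1 : Fq q (m - i) ≠ 0 := (Fq_pos hq _).ne'
  have h2 : Fq q i ≠ 0 := (Fq_pos hq _).ne'
  rw [gauss, Finset.prod_div_distrib, hden, ← hnum]
  field_simp

lemma gauss_symm {q : ℝ} (hq : 1 < q) {m i : ℕ} (h : i ≤ m) :
    gauss q (m : ℤ) i = gauss q (m : ℤ) (m - i) := by
  rw [gauss_eq_Fq hq h, gauss_eq_Fq hq (Nat.sub_le m i), Nat.sub_sub_self h, mul_comm]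

lemma gauss_pos {q : ℝ} (hq : 1 < q) {n : ℤ} {i : ℕ} (h : (i : ℤ) ≤ n) :
    0 < gauss q n i := by
  refine Finset.prod_pos fun t ht => ?_
  have ht' := Finset.mem_range.mp ht
  exact div_pos (zpow_sub_one_pos hq (by omega)) (zpow_sub_one_pos hq (by omega))

lemma gauss_mono {q : ℝ} (hq : 1 < q) {n n' : ℤ} {i : ℕ} (h : (i : ℤ) ≤ n)
    (h' : n ≤ n') : gauss q n i ≤ gauss q n' i := by
  refine Finset.prod_le_prod (fun t ht => ?_) (fun t ht => ?_)
  · have ht' := Finset.mem_range.mp ht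
    exact le_of_lt <| div_pos (zpow_sub_one_pos hq (by omega)) (zpow_sub_one_pos hq (by omega))
  · have ht' := Finset.mem_range.mp ht
    have hden : (0 : ℝ) < q ^ ((i : ℤ) - (t : ℤ)) - 1 := zpow_sub_one_pos hq (by omega)
    have hnum : q ^ (n - (t : ℤ)) ≤ q ^ (n' - (t : ℤ)) := zpow_le_zpow_right₀ hq.le (by omega)
    gcongr

lemma choose_two_strict_mono {a b : ℕ} (ha : 1 ≤ a) (hab : a < b) :
    a.choose 2 < b.choose 2 := by
  have h1 : (a + 1).choose 2 = a.choose 1 + a.choose 2 := Nat.choose_succ_succ a 1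
  have h2 : (a + 1).choose 2 ≤ b.choose 2 := Nat.choose_le_choose 2 (by omega)
  have h3 : a.choose 1 = a := Nat.choose_one_right a
  omega

lemma abs_lam_eq {q : ℝ} (hq : 1 < q) {v k j : ℕ} (hj : j ≤ k) (hvk : 2 * k ≤ v) :
    |lam q v k j| = q ^ (k.choose 2 + (k - j + 1).choose 2) *
      gauss q ((v : ℤ) - (k : ℤ) - (j : ℤ)) (v - 2 * k) := by
  have hq0 : (0 : ℝ) < q := lt_trans one_pos hq
  have hg : 0 < gauss q ((v : ℤ) - (k : ℤ) - (j : ℤ)) (v - 2 * k) := by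
    refine gauss_pos hq ?_
    push_cast [Nat.cast_sub hvk]
    omega
  have h1 : lam q v k j = (-1 : ℝ) ^ j * (q ^ (k.choose 2 + (k - j + 1).choose 2) *
      gauss q ((v : ℤ) - (k : ℤ) - (j : ℤ)) (v - 2 * k)) := by rw [lam]; ring
  rw [h1, abs_mul, abs_of_pos (mul_pos (pow_pos hq0 _) hg), mul_comm]
  simp [abs_pow]

lemma lam_abs_lt {q : ℝ} (hq : 1 < q) {v k i j : ℕ} (hk : 1 ≤ k) (hvk : 2 * k ≤ v)
    (hij : i < j) (hj : j ≤ k) : |lam q v k j| < |lam q v k i| := by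
  have hq0 : (0 : ℝ) < q := lt_trans one_pos hq
  rw [abs_lam_eq hq hj hvk, abs_lam_eq hq (le_trans (le_of_lt hij) hj) hvk]
  have hcast : ((v - 2 * k : ℕ) : ℤ) = (v : ℤ) - 2 * k := by
    push_cast [Nat.cast_sub hvk]; ring
  have hGj : 0 < gauss q ((v : ℤ) - (k : ℤ) - (j : ℤ)) (v - 2 * k) :=
    gauss_pos hq (by omega)
  have hGi : 0 < gauss q ((v : ℤ) - (k : ℤ) - (i : ℤ)) (v - 2 * k) :=
    gauss_pos hq (by omega)
  have hGmono : gauss q ((v : ℤ) - (k : ℤ) - (j : ℤ)) (v - 2 * k) ≤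
      gauss q ((v : ℤ) - (k : ℤ) - (i : ℤ)) (v - 2 * k) :=
    gauss_mono hq (by omega) (by omega)
  have hE : k.choose 2 + (k - j + 1).choose 2 < k.choose 2 + (k - i + 1).choose 2 := by
    have := choose_two_strict_mono (a := k - j + 1) (b := k - i + 1) (by omega) (by omega)
    omega
  have hpow : q ^ (k.choose 2 + (k - j + 1).choose 2) <
      q ^ (k.choose 2 + (k - i + 1).choose 2) := pow_lt_pow_right₀ hq hE
  calc q ^ (k.choose 2 + (k - j + 1).choose 2) * gauss q ((v : ℤ) - (k : ℤ) - (j : ℤ)) (v - 2 * k)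
      ≤ q ^ (k.choose 2 + (k - j + 1).choose 2) *
        gauss q ((v : ℤ) - (k : ℤ) - (i : ℤ)) (v - 2 * k) := by
        exact mul_le_mul_of_nonneg_left hGmono (le_of_lt (pow_pos hq0 _))
    _ < q ^ (k.choose 2 + (k - i + 1).choose 2) *
        gauss q ((v : ℤ) - (k : ℤ) - (i : ℤ)) (v - 2 * k) :=
        mul_lt_mul_of_pos_right hpow hGi

lemma choose_sum_sq (k : ℕ) : k.choose 2 + (k + 1).choose 2 = k ^ 2 := by
  induction k with
  | zero => simp
  | succ k ih =>
      have h1 : (k + 1).choose 2 = k.choose 1 + k.choose 2 := Nat.choose_succ_succ k 1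
      have h2 : (k + 1 + 1).choose 2 = (k + 1).choose 1 + (k + 1).choose 2 :=
        Nat.choose_succ_succ (k + 1) 1
      simp only [Nat.choose_one_right] at h1 h2
      have : (k + 1) ^ 2 = k ^ 2 + 2 * k + 1 := by ring
      omega

theorem qKneser_eigenvalues_distinct (q : ℝ) (hq : 1 < q) (v k : ℕ)
    (hk : 1 ≤ k) (hvk : 2 * k ≤ v) :
    (∀ i j : ℕ, i < j → j ≤ k → |lam q v k j| < |lam q v k i|) ∧
    lam q v k 0 = q ^ (k ^ 2) * gauss q ((v : ℤ) - (k : ℤ)) k ∧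
    0 < lam q v k 0 ∧
    (∀ j ≤ k, 0 < (-1 : ℝ) ^ j * lam q v k j) ∧
    (∀ i j : ℕ, i ≤ k → j ≤ k → lam q v k i = lam q v k j → i = j) := by
  have hq0 : (0 : ℝ) < q := lt_trans one_pos hq
  have hcast : ((v - 2 * k : ℕ) : ℤ) = (v : ℤ) - 2 * k := by
    push_cast [Nat.cast_sub hvk]; ring
  have habs : ∀ i j : ℕ, i < j → j ≤ k → |lam q v k j| < |lam q v k i| :=
    fun i j hij hj => lam_abs_lt hq hk hvk hij hj
  have hsign : ∀ j ≤ k, 0 < (-1 : ℝ) ^ j * lam q v k j := by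
    intro j hj
    have hg : 0 < gauss q ((v : ℤ) - (k : ℤ) - (j : ℤ)) (v - 2 * k) :=
      gauss_pos hq (by omega)
    have : (-1 : ℝ) ^ j * lam q v k j =
        q ^ (k.choose 2 + (k - j + 1).choose 2) *
          gauss q ((v : ℤ) - (k : ℤ) - (j : ℤ)) (v - 2 * k) := by
      rw [lam, ← mul_assoc, ← mul_assoc, ← mul_pow]
      norm_num
    rw [this]
    exact mul_pos (pow_pos hq0 _) hg
  have hlam0 : lam q v k 0 = q ^ (k ^ 2) * gauss q ((v : ℤ) - (k : ℤ)) k := by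
    have hsym : gauss q ((v - k : ℕ) : ℤ) (v - 2 * k) = gauss q ((v - k : ℕ) : ℤ) k := by
      have h1 : v - 2 * k ≤ v - k := by omega
      have h2 : (v - k) - (v - 2 * k) = k := by omega
      rw [gauss_symm hq h1, h2]
    have hcast2 : ((v - k : ℕ) : ℤ) = (v : ℤ) - (k : ℤ) := by
      push_cast [Nat.cast_sub (by omega : k ≤ v)]; ring
    rw [lam]
    simp only [Nat.sub_zero, pow_zero, one_mul, Nat.cast_zero, sub_zero]
    rw [← hcast2, hsym, choose_sum_sq]
  refine ⟨habs, hlam0, ?_, hsign, ?_⟩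
  · have := hsign 0 (by omega)
    simpa using this
  · intro i j hi hj heq
    by_contra hne
    rcases Nat.lt_or_ge i j with h | h
    · have := habs i j h hj
      rw [heq] at this
      exact lt_irrefl _ this
    · have hij : j < i := by omega
      have := habs j i hij hi
      rw [heq] at this
      exact lt_irrefl _ this
end
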